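/- arXiv:2009.06031 — 3 statements merged into one kernel-verified Lean document; each statement's English description precedes it below -/
import Mathlib

section
/- For every x ∈ X₀ there exists k ∈ ℕ such that x is constant on the left tail and constant on the right tail: x(i) = x(-k) for all integers i ≤ -k, and x(i) = x(k) for all integers i ≥ k. -/
/-- `x` contains the forbidden word `1 0^m 1^n 0` at position `i` (for `m, n ≥ 1`). -/
def ContainsForbidden (x : ℤ → Bool) (i m n : ℤ) : Prop :=
  x i = true ∧ (∀ j : ℤ, 1 ≤ j → j ≤ m → x (i + j) = false) ∧
    (∀ j : ℤ, 1 ≤ j → j ≤ n → x (i + m + j) = true) ∧ x (i + m + n + 1) = false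

/-- The subshift `X₀`: points containing no forbidden word `1 0^m 1^n 0`, `m, n ≥ 1`. -/
def X0 : Set (ℤ → Bool) :=
  {x | ∀ i m n : ℤ, 1 ≤ m → 1 ≤ n → ¬ ContainsForbidden x i m n}

/-!
A forbidden word `1 0^m 1^n 0` is exactly what sits between two consecutive occurrences of `10`
(drops `x (i + 1) < x i`), so a point of `X₀` has at most one drop. Away from that drop `x` is
monotone as a map `ℤ → Bool`, and a monotone Boolean sequence switches value at most once.
-/

open Set

theorem Int.exists_mem_Ico_not_and_forall_Ioc {P : ℤ → Prop} {p q : ℤ} (hp : ¬P p) (hq : P q)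
    (hpq : p ≤ q) : ∃ c ∈ Ico p q, ¬P c ∧ ∀ k ∈ Ioc c q, P k := by
  obtain ⟨c, ⟨hpc, hcq, hc⟩, hmax⟩ :=
    Int.exists_greatest_of_bdd (P := fun z => p ≤ z ∧ z ≤ q ∧ ¬P z)
      ⟨q, fun _ hz => hz.2.1⟩ ⟨p, le_rfl, hpq, hp⟩
  refine ⟨c, ⟨hpc, lt_of_le_of_ne hcq fun h => hc (h ▸ hq)⟩, hc, fun k ⟨hck, hkq⟩ => ?_⟩
  by_contra hk
  exact (hmax k ⟨by omega, hkq, hk⟩).not_gt hck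

theorem eq_of_mem_X0_of_drop {x : ℤ → Bool} (hx : x ∈ X0) {i j : ℤ}
    (hi : x (i + 1) < x i) (hj : x (j + 1) < x j) : i = j := by
  wlog hij : i < j generalizing i j
  · rcases lt_trichotomy i j with h | h | h
    exacts [this hi hj h, h, (this hj hi h).symm]
  rw [Bool.lt_iff] at hi hj
  -- The block of `1`s ending at `j` starts after a `0` at `a`, the block of `0`s ending at `a`
  -- starts after a `1` at `c`, and `c` is the start of a forbidden word
  obtain ⟨a, ⟨hia, haj⟩, ha, hones⟩ := Int.exists_mem_Ico_not_and_forall_Ioc (P := (x · = true))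
    (by simp [hi.1]) hj.2 (by omega : i + 1 ≤ j)
  obtain ⟨c, ⟨hic, hca⟩, hc, hzeros⟩ := Int.exists_mem_Ico_not_and_forall_Ioc (P := (x · = false))
    (by simp [hi.2]) (by simpa using ha) (by omega : i ≤ a)
  refine (hx c (a - c) (j - a) (by omega) (by omega) ⟨by simpa using hc, ?_, ?_, ?_⟩).elim
  · exact fun k _ _ => hzeros _ ⟨by omega, by omega⟩
  · exact fun k _ _ => hones _ ⟨by omega, by omega⟩
  · simpa [show c + (a - c) + (j - a) + 1 = j + 1 by omega] using hj.1

theorem exists_forall_ne_le_succ_of_mem_X0 {x : ℤ → Bool} (hx : x ∈ X0) :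
    ∃ d, ∀ i ≠ d, x i ≤ x (i + 1) := by
  by_cases h : ∃ d, x (d + 1) < x d
  · obtain ⟨d, hd⟩ := h
    exact ⟨d, fun i hid => not_lt.1 fun hi => hid (eq_of_mem_X0_of_drop hx hi hd)⟩
  · push Not at h
    exact ⟨0, fun i _ => h i⟩

theorem MonotoneOn.exists_forall_Ici_eq {α : Type*} [Preorder α] {f : α → Bool} {N : α}
    (hf : MonotoneOn f (Ici N)) : ∃ K, ∀ i j, K ≤ i → K ≤ j → f i = f j := by
  by_cases h : ∃ K, N ≤ K ∧ f K = true
  · obtain ⟨K, hNK, hK⟩ := h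
    have htrue : ∀ i, K ≤ i → f i = true := fun i hi =>
      Bool.eq_true_of_true_le (hK ▸ hf (mem_Ici.2 hNK) (mem_Ici.2 (hNK.trans hi)) hi)
    exact ⟨K, fun i j hi hj => (htrue i hi).trans (htrue j hj).symm⟩
  · push Not at h
    exact ⟨N, fun i j hi hj => by simp [h i hi, h j hj]⟩

theorem MonotoneOn.exists_forall_Iic_eq {α : Type*} [Preorder α] {f : α → Bool} {N : α}
    (hf : MonotoneOn f (Iic N)) : ∃ K, ∀ i j, i ≤ K → j ≤ K → f i = f j := by
  by_cases h : ∃ K, K ≤ N ∧ f K = false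
  · obtain ⟨K, hKN, hK⟩ := h
    have hfalse : ∀ i, i ≤ K → f i = false := fun i hi =>
      Bool.eq_false_of_le_false (hK ▸ hf (mem_Iic.2 (hi.trans hKN)) (mem_Iic.2 hKN) hi)
    exact ⟨K, fun i j hi hj => (hfalse i hi).trans (hfalse j hj).symm⟩
  · push Not at h
    exact ⟨N, fun i j hi hj => by simp [h i hi, h j hj]⟩

/-- Every point of `X₀` is eventually constant on the left tail and on the right tail. -/
theorem X0_eventually_constant_tails :
    ∀ x ∈ X0, ∃ k : ℕ,
      (∀ i : ℤ, i ≤ -(k : ℤ) → x i = x (-(k : ℤ))) ∧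
      (∀ i : ℤ, (k : ℤ) ≤ i → x i = x (k : ℤ)) := by
  intro x hx
  obtain ⟨d, hd⟩ := exists_forall_ne_le_succ_of_mem_X0 hx
  obtain ⟨L, hL⟩ := MonotoneOn.exists_forall_Iic_eq (N := d) <|
    monotoneOn_of_le_succ ordConnected_Iic fun i _ _ hi => hd i (Order.succ_le_iff.1 hi).ne
  obtain ⟨R, hR⟩ := MonotoneOn.exists_forall_Ici_eq (N := d + 1) <|
    monotoneOn_of_le_succ ordConnected_Ici fun i _ hi _ => hd i (by rw [mem_Ici] at hi; omega)
  refine ⟨L.natAbs + R.natAbs, fun i hi => hL _ _ (by omega) (by omega),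
    fun i hi => hR _ _ (by omega) (by omega)⟩
end

section
/- For every x ∈ X₀ there exists v ∈ {0,1} such that the orbit σ^n x converges, as n → ∞, to the constant sequence with value v in the product topology. Consequently, the only ω-limit points of the system (X₀, σ) are the two constant sequences ⋯000⋯ and ⋯111⋯. -/
/-!
A point of `X₀` has at most one descent `10`: given two descents `a < c`, the maximal run of
`0`s after `a` is followed by a maximal run of `1`s that ends no later than `c`, and together
they form a forbidden word `1 0^m 1^n 0` at `a`. A point that is not eventually constant takes
both values arbitrarily far to the right, hence has descents arbitrarily far to the right; so
every point of `X₀` is eventually constant. Its orbit then converges coordinatewise to a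
constant point, which is its only cluster point.
-/
open Filter Topology

/-- The left shift on `{0,1}^ℤ`: `(σ x)(i) = x(i+1)`. -/
def shiftMap (x : ℤ → Bool) : ℤ → Bool := fun i => x (i + 1)

theorem Int.exists_maximal_run {P : ℤ → Prop} {i j : ℤ} (hi : P (i + 1)) (hij : i < j)
    (hj : ¬ P j) : ∃ m, 1 ≤ m ∧ (∀ k, 1 ≤ k → k ≤ m → P (i + k)) ∧ ¬ P (i + m + 1) := by
  obtain ⟨l, ⟨hil, hl⟩, hmin⟩ :=
    Int.exists_least_of_bdd (P := fun z => i < z ∧ ¬ P z) ⟨i, fun z hz => hz.1.le⟩ ⟨j, hij, hj⟩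
  have hl_ne : l ≠ i + 1 := by
    rintro rfl
    exact hl hi
  refine ⟨l - i - 1, by omega, fun k hk hkm => ?_, by rwa [show i + (l - i - 1) + 1 = l by ring]⟩
  by_contra hk'
  have := hmin (i + k) ⟨by omega, hk'⟩
  omega

theorem shiftMap_iterate_apply (n : ℕ) (x : ℤ → Bool) (i : ℤ) :
    shiftMap^[n] x i = x (i + n) := by
  induction n generalizing x with
  | zero => simp
  | succ n ih =>
    rw [Function.iterate_succ_apply, ih]
    simp only [shiftMap, Nat.cast_succ, add_assoc]

def IsDescent (x : ℤ → Bool) (c : ℤ) : Prop :=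
  x c = true ∧ x (c + 1) = false

theorem exists_descent_of_lt {x : ℤ → Bool} {i j : ℤ} (hij : i < j) (hi : x i = true)
    (hj : x j = false) : ∃ c, i ≤ c ∧ IsDescent x c := by
  obtain ⟨m, hm, hones, hend⟩ := Int.exists_maximal_run (P := (x · = true)) (i := i - 1)
    (by simpa using hi) (by omega : i - 1 < j) (by simp [hj])
  exact ⟨i - 1 + m, by omega, hones m hm le_rfl, by simpa using hend⟩

theorem descent_le_of_mem_X0 {x : ℤ → Bool} (hx : x ∈ X0) {a c : ℤ} (ha : IsDescent x a)
    (hc : IsDescent x c) : c ≤ a := by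
  by_contra! hac
  obtain ⟨m, hm, hzeros, hm_end⟩ := Int.exists_maximal_run (P := (x · = false)) ha.2 hac
    (by simp [hc.1])
  have hmc : a + m < c := by
    by_contra! hca
    have := hzeros (c - a) (by omega) (by omega)
    simp [hc.1] at this
  obtain ⟨n, hn, hones, hn_end⟩ := Int.exists_maximal_run (P := (x · = true)) (i := a + m)
    (by simpa using hm_end) (by omega : a + m < c + 1) (by simp [hc.2])
  exact hx a m n hm hn ⟨ha.1, hzeros, hones, by simpa using hn_end⟩

theorem eventually_const_of_mem_X0 {x : ℤ → Bool} (hx : x ∈ X0) :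
    ∃ v, ∀ᶠ i in atTop, x i = v := by
  by_contra! h
  have hfreq : ∀ v k, ∃ i ≥ k, x i = v := fun v k => by
    simpa using Filter.frequently_atTop.1 (Filter.not_eventually.1 (h (!v))) k
  have hdesc : ∀ k, ∃ c, k ≤ c ∧ IsDescent x c := fun k => by
    obtain ⟨i, hki, hi⟩ := hfreq true k
    obtain ⟨j, hij, hj⟩ := hfreq false (i + 1)
    obtain ⟨c, hic, hc⟩ := exists_descent_of_lt (by omega) hi hj
    exact ⟨c, by omega, hc⟩
  obtain ⟨a, -, ha⟩ := hdesc 0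
  obtain ⟨c, hac, hc⟩ := hdesc (a + 1)
  have := descent_le_of_mem_X0 hx ha hc
  omega

theorem tendsto_shiftMap_iterate_of_eventually_eq {x : ℤ → Bool} {v : Bool}
    (h : ∀ᶠ i in atTop, x i = v) :
    Tendsto (fun n : ℕ => shiftMap^[n] x) atTop (𝓝 fun _ => v) := by
  refine tendsto_pi_nhds.2 fun i => tendsto_nhds_of_eventually_eq ?_
  have hi : Tendsto (fun n : ℕ => i + n) atTop atTop :=
    tendsto_atTop_add_const_left _ _ tendsto_natCast_atTop_atTop
  simpa only [shiftMap_iterate_apply] using hi.eventually h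

/-- Every orbit in `X₀` converges to one of the two constant points, and consequently the
only ω-limit points of `(X₀, σ)` are the constant sequences `⋯000⋯` and `⋯111⋯`. -/
theorem X0_orbits_converge_to_constants :
    (∀ x ∈ X0, ∃ v : Bool,
      Tendsto (fun n : ℕ => shiftMap^[n] x) atTop (𝓝 (fun _ : ℤ => v))) ∧
    (∀ x ∈ X0, ∀ y : ℤ → Bool,
      MapClusterPt y atTop (fun n : ℕ => shiftMap^[n] x) →
        y = (fun _ : ℤ => false) ∨ y = (fun _ : ℤ => true)) := by
  have hconv : ∀ x ∈ X0, ∃ v : Bool,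
      Tendsto (fun n : ℕ => shiftMap^[n] x) atTop (𝓝 (fun _ : ℤ => v)) := fun x hx =>
    (eventually_const_of_mem_X0 hx).imp fun _ => tendsto_shiftMap_iterate_of_eventually_eq
  refine ⟨hconv, fun x hx y hy => ?_⟩
  obtain ⟨v, hv⟩ := hconv x hx
  have hyv : y = fun _ => v := eq_of_nhds_neBot (ClusterPt.mono hy hv)
  cases v
  exacts [Or.inl hyv, Or.inr hyv]
end

section
/- There exist a nonempty compact metrizable topological space Y, a homeomorphism g : Y → Y, and a point p ∈ Y such that p is a non-wandering point of g (for every open set U containing p and every N ∈ ℕ there exist n > N and y ∈ U with g^n y ∈ U), yet p is not an ω-limit point of any point: for every q ∈ Y, p is not a cluster point of the sequence (g^n q)_{n∈ℕ} as n → ∞. In other words, for a general compact dynamical system the non-wandering set can be strictly larger than the union of all ω-limit sets. -/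
/-!
Take the two-sided shift on Boolean sequences over `ℤ` with at most two `true` entries and
`p = δ₀`. The point `δ₀ + δₙ` is close to `p`, and so is its `n`-th shift `δ₋ₙ + δ₀`, so `p` is
non-wandering. But an orbit accumulating at `p` would have to see a `true` at position `0`
infinitely often, i.e. the starting sequence would have infinitely many `true` entries.
-/

open Filter Topology

def IsNonwanderingPt {Y : Type*} [TopologicalSpace Y] (g : Y → Y) (p : Y) : Prop :=
  ∀ U : Set Y, IsOpen U → p ∈ U → ∀ N : ℕ, ∃ n : ℕ, N < n ∧ ∃ y ∈ U, g^[n] y ∈ U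

theorem isNonwanderingPt_of_tendsto {Y : Type*} [TopologicalSpace Y] {g : Y → Y} {p : Y}
    {y : ℕ → Y} (hy : Tendsto y atTop (𝓝 p))
    (hgy : Tendsto (fun n => g^[n] (y n)) atTop (𝓝 p)) : IsNonwanderingPt g p := by
  intro U hU hpU N
  obtain ⟨n, hNn, hyn, hgyn⟩ := ((eventually_gt_atTop N).and
    ((hy.eventually (hU.mem_nhds hpU)).and (hgy.eventually (hU.mem_nhds hpU)))).exists
  exact ⟨n, hNn, y n, hyn, hgyn⟩

theorem not_mapClusterPt_of_finite {Y : Type*} [TopologicalSpace Y] {p : Y} {f : ℕ → Y}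
    {U : Set Y} (hU : U ∈ 𝓝 p) (hfin : {n | f n ∈ U}.Finite) : ¬ MapClusterPt p atTop f :=
  fun h => Nat.frequently_atTop_iff_infinite.mp (mapClusterPt_iff_frequently.mp h U hU) hfin

section BoundedSupport

variable {ι : Type*}

def boundedSupport (ι : Type*) (k : ℕ) : Set (ι → Bool) :=
  {x | ∀ s : Finset ι, (∀ i ∈ s, x i = true) → s.card ≤ k}

theorem isClosed_boundedSupport (k : ℕ) : IsClosed (boundedSupport ι k) := by
  simp only [boundedSupport, Set.ofPred_forall]
  refine isClosed_iInter fun s => ?_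
  by_cases hs : s.card ≤ k
  · simp [hs]
  · have hunion : {x : ι → Bool | (∀ i ∈ s, x i = true) → s.card ≤ k} =
        ⋃ i ∈ s, {x | x i = false} := by
      ext x
      simp [hs]
    rw [hunion]
    exact isClosed_biUnion_finset fun i _ => isClosed_eq (continuous_apply i) continuous_const

theorem comp_mem_boundedSupport_iff {ι' : Type*} (e : ι ≃ ι') (x : ι' → Bool) (k : ℕ) :
    x ∘ e ∈ boundedSupport ι k ↔ x ∈ boundedSupport ι' k := by
  refine ⟨fun hx s hs => ?_, fun hx s hs => ?_⟩
  · simpa using hx (s.map e.symm.toEmbedding) (by simpa using fun i hi => hs (e i) hi)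
  · simpa using hx (s.map e.toEmbedding) (by simpa using fun i hi => hs (e.symm i) hi)

theorem decide_mem_mem_boundedSupport [DecidableEq ι] {k : ℕ} (s : Finset ι)
    (hs : s.card ≤ k) : (fun i => decide (i ∈ s)) ∈ boundedSupport ι k :=
  fun t ht => (Finset.card_le_card fun i hi => by simpa using ht i hi).trans hs

theorem finite_of_mem_boundedSupport {k : ℕ} {x : ι → Bool} (hx : x ∈ boundedSupport ι k) :
    {i | x i = true}.Finite := by
  by_contra hinf
  obtain ⟨s, hs, hcard⟩ := Set.Infinite.exists_subset_card_eq hinf (k + 1)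
  have := hx s fun i hi => hs hi
  omega

end BoundedSupport

def shift : (ℤ → Bool) ≃ₜ (ℤ → Bool) where
  toFun x i := x (i + 1)
  invFun x i := x (i - 1)
  left_inv x := by simp
  right_inv x := by simp
  continuous_toFun := continuous_pi fun i => continuous_apply (i + 1)
  continuous_invFun := continuous_pi fun i => continuous_apply (i - 1)

def shiftOn (k : ℕ) : boundedSupport ℤ k ≃ₜ boundedSupport ℤ k :=
  shift.subtype fun x => (comp_mem_boundedSupport_iff (Equiv.addRight 1) x k).symm

theorem shiftOn_iterate_apply (k n : ℕ) (x : boundedSupport ℤ k) (i : ℤ) :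
    ((shiftOn k)^[n] x : ℤ → Bool) i = (x : ℤ → Bool) (i + n) := by
  induction n generalizing i with
  | zero => simp
  | succ n ih =>
    rw [Function.iterate_succ_apply', show i + (n + 1 : ℕ) = i + 1 + n by push_cast; ring, ← ih]
    rfl

def deltaZero : boundedSupport ℤ 2 :=
  ⟨fun i => decide (i ∈ ({0} : Finset ℤ)), decide_mem_mem_boundedSupport _ (by simp)⟩

theorem isNonwanderingPt_deltaZero : IsNonwanderingPt (shiftOn 2) deltaZero := by
  let y (n : ℕ) : boundedSupport ℤ 2 :=
    ⟨fun i => decide (i ∈ ({0, (n : ℤ)} : Finset ℤ)),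
      decide_mem_mem_boundedSupport _ Finset.card_le_two⟩
  refine isNonwanderingPt_of_tendsto (y := y) ?_ ?_ <;>
    refine tendsto_subtype_rng.2 (tendsto_pi_nhds.2 fun i => tendsto_nhds_of_eventually_eq ?_) <;>
    filter_upwards [eventually_gt_atTop i.natAbs] with n hn
  · simp only [y, deltaZero, Finset.mem_insert, Finset.mem_singleton, decide_eq_decide]
    omega
  · simp only [y, deltaZero, shiftOn_iterate_apply, Finset.mem_insert, Finset.mem_singleton,
      decide_eq_decide]
    omega

theorem not_mapClusterPt_shiftOn_iterate {k : ℕ} {p : boundedSupport ℤ k}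
    (hp : (p : ℤ → Bool) 0 = true) (q : boundedSupport ℤ k) :
    ¬ MapClusterPt p atTop (fun n : ℕ => (shiftOn k)^[n] q) := by
  have hU : IsOpen {x : boundedSupport ℤ k | (x : ℤ → Bool) 0 = true} :=
    (isOpen_discrete {true}).preimage (f := fun x : boundedSupport ℤ k => (x : ℤ → Bool) 0)
      ((continuous_apply 0).comp continuous_subtype_val)
  refine not_mapClusterPt_of_finite (hU.mem_nhds hp) ?_
  simpa [shiftOn_iterate_apply] using
    (finite_of_mem_boundedSupport q.2).preimage Nat.cast_injective.injOn

/-- There is a nonempty compact metrizable dynamical system `(Y, g)` with a non-wandering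
point `p` that is not an ω-limit point of any orbit: the non-wandering set can be strictly
larger than the union of all ω-limit sets. -/
theorem exists_nonwandering_not_omega_limit :
    ∃ (Y : Type) (_ : TopologicalSpace Y),
      CompactSpace Y ∧ TopologicalSpace.MetrizableSpace Y ∧ Nonempty Y ∧
      ∃ (g : Y ≃ₜ Y) (p : Y),
        (∀ U : Set Y, IsOpen U → p ∈ U → ∀ N : ℕ,
          ∃ n : ℕ, N < n ∧ ∃ y ∈ U, (⇑g)^[n] y ∈ U) ∧
        (∀ q : Y, ¬ MapClusterPt p atTop (fun n : ℕ => (⇑g)^[n] q)) := by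
  refine ⟨boundedSupport ℤ 2, inferInstance,
    isCompact_iff_compactSpace.mp (isClosed_boundedSupport 2).isCompact, inferInstance,
    ⟨deltaZero⟩, shiftOn 2, deltaZero, isNonwanderingPt_deltaZero, ?_⟩
  exact not_mapClusterPt_shiftOn_iterate (by simp [deltaZero])
end
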